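/- arXiv:1908.01384 — 4 statements merged into one kernel-verified Lean document; each statement's English description precedes it below -/
import Mathlib

section
/- Let A, X ∈ ℝ^{n×d}, Q ∈ ℝ^{m×n}, and let λ ∈ ℝ^{m×d} satisfy ‖λ_k‖₂ ≤ 1 for every row index k. Then ⟨Qᵀλ, A⟩_F − (1/4)‖Qᵀλ‖_F² ≤ ‖X − A‖_F² + ∑_{k=1}^{m} ‖(QX)_k‖₂. (Weak duality for the convex clustering problem: every dual-feasible value of the convex clustering dual function is a lower bound on every primal objective value.) -/
open Matrix

/-- **Weak duality for convex clustering.**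
For any data matrix `A`, edge matrix `Q`, dual-feasible `l` (rows of Euclidean
norm ≤ 1), and any primal point `X`:
`⟨Qᵀl, A⟩_F − (1/4)‖Qᵀl‖_F² ≤ ‖X − A‖_F² + ∑ₖ ‖(QX)ₖ‖₂`. -/
theorem weak_duality_convex_clustering
    (n d m : ℕ)
    (A X : Matrix (Fin n) (Fin d) ℝ)
    (Q : Matrix (Fin m) (Fin n) ℝ)
    (l : Matrix (Fin m) (Fin d) ℝ)
    (hl : ∀ k : Fin m, Real.sqrt (∑ j, (l k j) ^ 2) ≤ 1) :
    (∑ i, ∑ j, (Qᵀ * l) i j * A i j) - (1 / 4) * ∑ i, ∑ j, ((Qᵀ * l) i j) ^ 2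
      ≤ (∑ i, ∑ j, (X i j - A i j) ^ 2)
        + ∑ k, Real.sqrt (∑ j, ((Q * X) k j) ^ 2) := by
  -- split the Frobenius inner product
  have h1 : (∑ i, ∑ j, (Qᵀ * l) i j * A i j)
      = (∑ i, ∑ j, (Qᵀ * l) i j * X i j)
        + ∑ i, ∑ j, (Qᵀ * l) i j * (A i j - X i j) := by
    rw [← Finset.sum_add_distrib]
    refine Finset.sum_congr rfl fun i _ => ?_
    rw [← Finset.sum_add_distrib]
    refine Finset.sum_congr rfl fun j _ => ?_
    ring
  -- quadratic bound
  have h2 : (∑ i, ∑ j, (Qᵀ * l) i j * (A i j - X i j))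
      - (1 / 4) * ∑ i, ∑ j, ((Qᵀ * l) i j) ^ 2
      ≤ ∑ i, ∑ j, (X i j - A i j) ^ 2 := by
    rw [Finset.mul_sum, ← Finset.sum_sub_distrib]
    refine Finset.sum_le_sum fun i _ => ?_
    rw [Finset.mul_sum, ← Finset.sum_sub_distrib]
    refine Finset.sum_le_sum fun j _ => ?_
    nlinarith [sq_nonneg (X i j - A i j + (Qᵀ * l) i j / 2)]
  -- transpose identity
  have h3 : (∑ i, ∑ j, (Qᵀ * l) i j * X i j)
      = ∑ k, ∑ j, l k j * (Q * X) k j := by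
    simp only [Matrix.mul_apply, Matrix.transpose_apply, Finset.sum_mul, Finset.mul_sum]
    calc ∑ i : Fin n, ∑ j : Fin d, ∑ k : Fin m, Q k i * l k j * X i j
        = ∑ i : Fin n, ∑ k : Fin m, ∑ j : Fin d, Q k i * l k j * X i j :=
          Finset.sum_congr rfl fun i _ => Finset.sum_comm
      _ = ∑ k : Fin m, ∑ i : Fin n, ∑ j : Fin d, Q k i * l k j * X i j :=
          Finset.sum_comm
      _ = ∑ k : Fin m, ∑ j : Fin d, ∑ i : Fin n, Q k i * l k j * X i j :=
          Finset.sum_congr rfl fun k _ => Finset.sum_comm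
      _ = ∑ k : Fin m, ∑ j : Fin d, ∑ i : Fin n, l k j * (Q k i * X i j) :=
          Finset.sum_congr rfl fun k _ => Finset.sum_congr rfl fun j _ =>
            Finset.sum_congr rfl fun i _ => by ring
  -- Cauchy–Schwarz per row
  have h4 : (∑ k, ∑ j, l k j * (Q * X) k j)
      ≤ ∑ k, Real.sqrt (∑ j, ((Q * X) k j) ^ 2) := by
    refine Finset.sum_le_sum fun k _ => ?_
    calc ∑ j, l k j * (Q * X) k j
        ≤ Real.sqrt (∑ j, (l k j) ^ 2) * Real.sqrt (∑ j, ((Q * X) k j) ^ 2) :=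
          Real.sum_mul_le_sqrt_mul_sqrt _ _ _
      _ ≤ 1 * Real.sqrt (∑ j, ((Q * X) k j) ^ 2) := by
          gcongr
          exact hl k
      _ = Real.sqrt (∑ j, ((Q * X) k j) ^ 2) := one_mul _
  linarith [h1, h2, h3 ▸ h4]
end

section
/- Let A ∈ ℝ^{n×d} and Q ∈ ℝ^{m×n}, let C = {λ ∈ ℝ^{m×d} : ‖λ_k‖₂ ≤ 1 for all rows k}, and let D(λ) = ⟨Qᵀλ, A⟩_F − (1/4)‖Qᵀλ‖_F². Suppose λ* ∈ C maximizes D over C. Then the matrix X* := A − (1/2)Qᵀλ* minimizes the convex clustering primal objective P(X) = ‖X − A‖_F² + ∑_{k=1}^{m} ‖(QX)_k‖₂ over all X ∈ ℝ^{n×d}, and moreover P(X*) = D(λ*). (Strong duality and primal recovery for convex clustering, the instantiation of Theorem 1 with f(X;A) = ‖X − A‖_F² and p = q = 2.) -/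
/-!
Weak duality is completing the square: for `l ∈ C`, Cauchy–Schwarz row by row gives
`∑ₖ ‖(QX)ₖ‖ ≥ ⟨l, QX⟩ = ⟨Qᵀl, X⟩`, and
`‖X - A‖² + ⟨Qᵀl, X⟩ = D(l) + ‖X - A + ½ Qᵀl‖²`, so `P(X) ≥ D(l)`.
At `X* = A - ½ Qᵀl*` the square vanishes, so `P(X*) = D(l*)` as soon as the regulariser
`∑ₖ ‖(QX*)ₖ‖` equals `⟨l*, QX*⟩`. The gradient of the concave quadratic `D` at `l*` is `QX*`,
so maximality over the convex set `C` gives `⟨l, QX*⟩ ≤ ⟨l*, QX*⟩` for all `l ∈ C`; taking for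
`l` the normalised rows of `QX*` yields the missing inequality `∑ₖ ‖(QX*)ₖ‖ ≤ ⟨l*, QX*⟩`.
-/

open Set Filter Topology RealInnerProductSpace Matrix

theorem nonpos_of_forall_mul_le_sq_mul {a c : ℝ} (h : ∀ t ∈ Ioc (0 : ℝ) 1, t * a ≤ t ^ 2 * c) :
    a ≤ 0 := by
  have hlim : Tendsto (fun t => t * c) (𝓝[>] 0) (𝓝 0) := by
    simpa using ((tendsto_id (x := 𝓝 (0 : ℝ))).mul_const c).mono_left nhdsWithin_le_nhds
  refine ge_of_tendsto hlim ?_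
  filter_upwards [Ioo_mem_nhdsGT one_pos] with t ht
  have := h t ⟨ht.1, ht.2.le⟩
  nlinarith [ht.1]

section Duality

variable {E F : Type*} [NormedAddCommGroup E] [InnerProductSpace ℝ E]
  [NormedAddCommGroup F] [InnerProductSpace ℝ F]

theorem norm_sub_sq_add_inner (x a b : E) :
    ‖x - a‖ ^ 2 + ⟪b, x⟫ = ⟪b, a⟫ - 1 / 4 * ‖b‖ ^ 2 + ‖x - a + (1 / 2 : ℝ) • b‖ ^ 2 := by
  rw [norm_add_sq_real, norm_smul, inner_smul_right, real_inner_comm b, inner_sub_right,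
    Real.norm_of_nonneg (by norm_num : (0 : ℝ) ≤ 1 / 2)]
  ring

noncomputable def dualObjective (T : F →ₗ[ℝ] E) (a : E) (l : F) : ℝ :=
  ⟪T l, a⟫ - 1 / 4 * ‖T l‖ ^ 2

noncomputable def primalObjective (S : E →ₗ[ℝ] F) (h : F → ℝ) (a x : E) : ℝ :=
  ‖x - a‖ ^ 2 + h (S x)

/- For convex clustering `T = Qᵀ`, `S = Q` and `h` is the support function `∑ₖ ‖yₖ‖` of the
dual feasible set `C`. -/
variable {T : F →ₗ[ℝ] E} {S : E →ₗ[ℝ] F} {h : F → ℝ} {a : E} {C : Set F} {l₀ : F}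

theorem dualObjective_add_smul (l v : F) (t : ℝ) :
    dualObjective T a (l + t • v) =
      dualObjective T a l + t * ⟪T v, a - (1 / 2 : ℝ) • T l⟫ - t ^ 2 / 4 * ‖T v‖ ^ 2 := by
  simp only [dualObjective, map_add, map_smul, norm_add_sq_real, norm_smul, inner_add_left,
    real_inner_smul_left, real_inner_smul_right, inner_sub_right, real_inner_comm (T l),
    mul_pow, Real.norm_eq_abs, sq_abs]
  ring

theorem inner_le_of_isMaxOn_dualObjective (hC : Convex ℝ C) (hl₀ : l₀ ∈ C)
    (hmax : IsMaxOn (dualObjective T a) C l₀) {l : F} (hl : l ∈ C) :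
    ⟪T l, a - (1 / 2 : ℝ) • T l₀⟫ ≤ ⟪T l₀, a - (1 / 2 : ℝ) • T l₀⟫ := by
  have hslope : ⟪T (l - l₀), a - (1 / 2 : ℝ) • T l₀⟫ ≤ 0 := by
    refine nonpos_of_forall_mul_le_sq_mul (c := ‖T (l - l₀)‖ ^ 2 / 4) fun t ht => ?_
    have : dualObjective T a (l₀ + t • (l - l₀)) ≤ dualObjective T a l₀ :=
      hmax (hC.add_smul_sub_mem hl₀ hl ⟨ht.1.le, ht.2⟩)
    rw [dualObjective_add_smul] at this
    linarith
  rwa [map_sub, inner_sub_left, sub_nonpos] at hslope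

theorem dualObjective_le_primalObjective (hTS : ∀ l x, ⟪T l, x⟫ = ⟪l, S x⟫) {l : F}
    (hl : ∀ y, ⟪l, y⟫ ≤ h y) (x : E) :
    dualObjective T a l ≤ primalObjective S h a x := by
  have hsq := norm_sub_sq_add_inner x a (T l)
  rw [hTS] at hsq
  have := hl (S x)
  unfold dualObjective primalObjective
  nlinarith [sq_nonneg ‖x - a + (1 / 2 : ℝ) • T l‖]

theorem primalObjective_eq_dualObjective_of_isMaxOn (hTS : ∀ l x, ⟪T l, x⟫ = ⟪l, S x⟫)
    (hC : Convex ℝ C) (hh : ∀ y, IsGreatest ((⟪·, y⟫) '' C) (h y)) (hl₀ : l₀ ∈ C)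
    (hmax : IsMaxOn (dualObjective T a) C l₀) :
    primalObjective S h a (a - (1 / 2 : ℝ) • T l₀) = dualObjective T a l₀ := by
  set x := a - (1 / 2 : ℝ) • T l₀
  obtain ⟨l, hl, hlx : ⟪l, S x⟫ = h (S x)⟩ := (hh (S x)).1
  have hvar : ⟪T l, x⟫ ≤ ⟪T l₀, x⟫ := inner_le_of_isMaxOn_dualObjective hC hl₀ hmax hl
  rw [hTS, hTS, hlx] at hvar
  have hSx : h (S x) = ⟪T l₀, x⟫ := by
    rw [hTS]
    exact le_antisymm hvar ((hh (S x)).2 ⟨l₀, hl₀, rfl⟩)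
  have hx : x - a + (1 / 2 : ℝ) • T l₀ = 0 := by
    simp only [x]
    abel
  rw [primalObjective, hSx, norm_sub_sq_add_inner, hx, norm_zero, dualObjective]
  ring

theorem isMinOn_primalObjective_of_isMaxOn (hTS : ∀ l x, ⟪T l, x⟫ = ⟪l, S x⟫)
    (hC : Convex ℝ C) (hh : ∀ y, IsGreatest ((⟪·, y⟫) '' C) (h y)) (hl₀ : l₀ ∈ C)
    (hmax : IsMaxOn (dualObjective T a) C l₀) :
    IsMinOn (primalObjective S h a) univ (a - (1 / 2 : ℝ) • T l₀) :=
  isMinOn_univ_iff.2 fun x => by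
    rw [primalObjective_eq_dualObjective_of_isMaxOn hTS hC hh hl₀ hmax]
    exact dualObjective_le_primalObjective hTS (fun y => (hh y).2 ⟨l₀, hl₀, rfl⟩) x

end Duality

section GroupNorm

variable {ι : Type*} {V : ι → Type*} [∀ i, NormedAddCommGroup (V i)]
  [∀ i, InnerProductSpace ℝ (V i)]

theorem convex_setOf_forall_norm_le_one : Convex ℝ {l : PiLp 2 V | ∀ i, ‖l i‖ ≤ 1} := by
  intro x hx y hy s t hs ht hst i
  calc ‖(s • x + t • y) i‖ ≤ s * ‖x i‖ + t * ‖y i‖ := by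
        simpa [norm_smul, abs_of_nonneg hs, abs_of_nonneg ht] using norm_add_le (s • x i) (t • y i)
    _ ≤ s * 1 + t * 1 := by gcongr <;> simp_all
    _ = 1 := by rw [mul_one, mul_one, hst]

theorem isGreatest_inner_sum_norm [Fintype ι] (y : PiLp 2 V) :
    IsGreatest ((⟪·, y⟫) '' {l : PiLp 2 V | ∀ i, ‖l i‖ ≤ 1}) (∑ i, ‖y i‖) := by
  refine ⟨⟨WithLp.toLp 2 fun i => ‖y i‖⁻¹ • y i, fun i => ?_, ?_⟩, ?_⟩
  · rw [PiLp.toLp_apply, norm_smul, norm_inv, norm_norm]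
    exact inv_mul_le_one_of_le₀ le_rfl (norm_nonneg _)
  · simp only [PiLp.inner_apply, real_inner_smul_left, real_inner_self_eq_norm_sq]
    refine Finset.sum_congr rfl fun i _ => ?_
    rcases eq_or_ne ‖y i‖ 0 with hy | hy
    · simp [hy]
    · field_simp
  · rintro _ ⟨l, hl, rfl⟩
    simp only [PiLp.inner_apply]
    refine Finset.sum_le_sum fun i _ => ?_
    calc ⟪l i, y i⟫ ≤ ‖l i‖ * ‖y i‖ := real_inner_le_norm _ _
      _ ≤ ‖y i‖ := mul_le_of_le_one_left (norm_nonneg _) (hl i)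

end GroupNorm

namespace Matrix

variable {ι ι' κ : Type*}

/-- A matrix as the `ℓ²`-sum of its rows: the inner product becomes the Frobenius one and
`‖toEuclideanRows U i‖` is the Euclidean norm of the `i`-th row. -/
noncomputable def toEuclideanRows : Matrix ι κ ℝ ≃ₗ[ℝ] PiLp 2 (fun _ : ι => EuclideanSpace ℝ κ) :=
  (LinearEquiv.piCongrRight fun _ => (WithLp.linearEquiv 2 ℝ (κ → ℝ)).symm).trans
    (WithLp.linearEquiv 2 ℝ _).symm

@[simp]
theorem toEuclideanRows_apply (U : Matrix ι κ ℝ) (i : ι) (j : κ) :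
    toEuclideanRows U i j = U i j := rfl

theorem norm_toEuclideanRows_apply [Fintype κ] (U : Matrix ι κ ℝ) (i : ι) :
    ‖toEuclideanRows U i‖ = √(∑ j, U i j ^ 2) := by
  simp [EuclideanSpace.norm_eq]

theorem inner_toEuclideanRows [Fintype ι] [Fintype κ] (U V : Matrix ι κ ℝ) :
    ⟪toEuclideanRows U, toEuclideanRows V⟫ = ∑ i, ∑ j, U i j * V i j := by
  simp [PiLp.inner_apply, mul_comm]

theorem norm_toEuclideanRows_sq [Fintype ι] [Fintype κ] (U : Matrix ι κ ℝ) :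
    ‖toEuclideanRows U‖ ^ 2 = ∑ i, ∑ j, U i j ^ 2 := by
  rw [← real_inner_self_eq_norm_sq, inner_toEuclideanRows]
  simp [sq]

theorem sum_sum_transpose_mul_mul [Fintype ι] [Fintype ι'] [Fintype κ] (Q : Matrix ι' ι ℝ)
    (L : Matrix ι' κ ℝ) (X : Matrix ι κ ℝ) :
    ∑ i, ∑ j, (Qᵀ * L) i j * X i j = ∑ k, ∑ j, L k j * (Q * X) k j := by
  simp only [mul_apply, transpose_apply, Finset.sum_mul, Finset.mul_sum]
  calc ∑ i, ∑ j, ∑ k, Q k i * L k j * X i j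
      = ∑ j, ∑ k, ∑ i, Q k i * L k j * X i j := by
        rw [Finset.sum_comm]; exact Finset.sum_congr rfl fun j _ => Finset.sum_comm
    _ = ∑ k, ∑ j, ∑ i, L k j * (Q k i * X i j) := by
        rw [Finset.sum_comm]; simp only [mul_left_comm, mul_comm]

noncomputable def rowsMulLeft [Fintype ι] (Q : Matrix ι' ι ℝ) :
    PiLp 2 (fun _ : ι => EuclideanSpace ℝ κ) →ₗ[ℝ] PiLp 2 (fun _ : ι' => EuclideanSpace ℝ κ) :=
  toEuclideanRows.toLinearMap ∘ₗ mulLeftLinearMap κ ℝ Q ∘ₗ toEuclideanRows.symm.toLinearMap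

@[simp]
theorem rowsMulLeft_toEuclideanRows [Fintype ι] (Q : Matrix ι' ι ℝ) (X : Matrix ι κ ℝ) :
    rowsMulLeft Q (toEuclideanRows X) = toEuclideanRows (Q * X) := by
  simp [rowsMulLeft]

theorem inner_rowsMulLeft_transpose [Fintype ι] [Fintype ι'] [Fintype κ] (Q : Matrix ι' ι ℝ)
    (l : PiLp 2 (fun _ : ι' => EuclideanSpace ℝ κ)) (x : PiLp 2 (fun _ : ι => EuclideanSpace ℝ κ)) :
    ⟪rowsMulLeft Qᵀ l, x⟫ = ⟪l, rowsMulLeft Q x⟫ := by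
  obtain ⟨L, rfl⟩ := toEuclideanRows.surjective l
  obtain ⟨X, rfl⟩ := toEuclideanRows.surjective x
  simp only [rowsMulLeft_toEuclideanRows, inner_toEuclideanRows, sum_sum_transpose_mul_mul]

theorem toEuclideanRows_mem_iff [Fintype κ] (L : Matrix ι κ ℝ) :
    toEuclideanRows L ∈ {l : PiLp 2 (fun _ : ι => EuclideanSpace ℝ κ) | ∀ k, ‖l k‖ ≤ 1} ↔
      ∀ k, √(∑ j, L k j ^ 2) ≤ 1 := by
  simp [norm_toEuclideanRows_apply]

theorem dualObjective_toEuclideanRows [Fintype ι] [Fintype ι'] [Fintype κ] (B : Matrix ι ι' ℝ)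
    (A : Matrix ι κ ℝ) (L : Matrix ι' κ ℝ) :
    dualObjective (rowsMulLeft B) (toEuclideanRows A) (toEuclideanRows L) =
      (∑ i, ∑ j, (B * L) i j * A i j) - 1 / 4 * ∑ i, ∑ j, (B * L) i j ^ 2 := by
  simp only [dualObjective, rowsMulLeft_toEuclideanRows, inner_toEuclideanRows,
    norm_toEuclideanRows_sq]

theorem primalObjective_toEuclideanRows [Fintype ι] [Fintype ι'] [Fintype κ] (Q : Matrix ι' ι ℝ)
    (A X : Matrix ι κ ℝ) :
    primalObjective (rowsMulLeft Q) (fun y => ∑ k, ‖y k‖) (toEuclideanRows A)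
        (toEuclideanRows X) =
      (∑ i, ∑ j, (X i j - A i j) ^ 2) + ∑ k, √(∑ j, (Q * X) k j ^ 2) := by
  simp only [primalObjective, ← map_sub, norm_toEuclideanRows_sq, rowsMulLeft_toEuclideanRows,
    norm_toEuclideanRows_apply, sub_apply]

end Matrix

/-- **Strong duality and primal recovery for convex clustering.**
If `l∗` maximizes the dual function `D(l) = ⟨Qᵀl, A⟩_F − (1/4)‖Qᵀl‖_F²` over the
dual feasible set `C = {l : ‖lₖ‖₂ ≤ 1 ∀k}`, then `X∗ = A − (1/2)Qᵀl∗` minimizes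
the convex clustering primal objective
`P(X) = ‖X − A‖_F² + ∑ₖ ‖(QX)ₖ‖₂`, and `P(X∗) = D(l∗)`. -/
theorem strong_duality_convex_clustering
    (n d m : ℕ)
    (A : Matrix (Fin n) (Fin d) ℝ)
    (Q : Matrix (Fin m) (Fin n) ℝ)
    (lstar : Matrix (Fin m) (Fin d) ℝ)
    (hfeas : ∀ k : Fin m, Real.sqrt (∑ j, (lstar k j) ^ 2) ≤ 1)
    (hmax : ∀ l : Matrix (Fin m) (Fin d) ℝ,
      (∀ k : Fin m, Real.sqrt (∑ j, (l k j) ^ 2) ≤ 1) →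
      (∑ i, ∑ j, (Qᵀ * l) i j * A i j) - (1 / 4) * ∑ i, ∑ j, ((Qᵀ * l) i j) ^ 2
        ≤ (∑ i, ∑ j, (Qᵀ * lstar) i j * A i j)
            - (1 / 4) * ∑ i, ∑ j, ((Qᵀ * lstar) i j) ^ 2) :
    (∀ X : Matrix (Fin n) (Fin d) ℝ,
        (∑ i, ∑ j, ((A - (1 / 2 : ℝ) • (Qᵀ * lstar)) i j - A i j) ^ 2)
            + ∑ k, Real.sqrt (∑ j, ((Q * (A - (1 / 2 : ℝ) • (Qᵀ * lstar))) k j) ^ 2)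
          ≤ (∑ i, ∑ j, (X i j - A i j) ^ 2)
              + ∑ k, Real.sqrt (∑ j, ((Q * X) k j) ^ 2))
    ∧ (∑ i, ∑ j, ((A - (1 / 2 : ℝ) • (Qᵀ * lstar)) i j - A i j) ^ 2)
          + ∑ k, Real.sqrt (∑ j, ((Q * (A - (1 / 2 : ℝ) • (Qᵀ * lstar))) k j) ^ 2)
        = (∑ i, ∑ j, (Qᵀ * lstar) i j * A i j)
            - (1 / 4) * ∑ i, ∑ j, ((Qᵀ * lstar) i j) ^ 2 := by
  set C := {l : PiLp 2 (fun _ : Fin m => EuclideanSpace ℝ (Fin d)) | ∀ k, ‖l k‖ ≤ 1}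
  have hl₀ : toEuclideanRows lstar ∈ C := (toEuclideanRows_mem_iff lstar).2 hfeas
  have hmax' : IsMaxOn (dualObjective (rowsMulLeft Qᵀ) (toEuclideanRows A)) C
      (toEuclideanRows lstar) := by
    intro l hl
    obtain ⟨L, rfl⟩ := toEuclideanRows.surjective l
    have := hmax L ((toEuclideanRows_mem_iff L).1 hl)
    rwa [← dualObjective_toEuclideanRows, ← dualObjective_toEuclideanRows] at this
  have hx : toEuclideanRows A - (1 / 2 : ℝ) • rowsMulLeft Qᵀ (toEuclideanRows lstar) =
      toEuclideanRows (A - (1 / 2 : ℝ) • (Qᵀ * lstar)) := by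
    simp
  have hmin := isMinOn_primalObjective_of_isMaxOn (inner_rowsMulLeft_transpose Q)
    convex_setOf_forall_norm_le_one isGreatest_inner_sum_norm hl₀ hmax'
  have heq := primalObjective_eq_dualObjective_of_isMaxOn (inner_rowsMulLeft_transpose Q)
    convex_setOf_forall_norm_le_one isGreatest_inner_sum_norm hl₀ hmax'
  rw [hx] at hmin heq
  refine ⟨fun X => ?_, ?_⟩
  · rw [← primalObjective_toEuclideanRows, ← primalObjective_toEuclideanRows]
    exact isMinOn_univ_iff.1 hmin _
  · rw [← primalObjective_toEuclideanRows, ← dualObjective_toEuclideanRows]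
    exact heq
end

section
/- Let a, δ, u, ũ ∈ ℝ^N, β > 0 and c ∈ ℝ. Define x := a − (1/2)u and x̃ := (a + δ) − (1/2)ũ. Assume (i) ⟨a, u⟩ − ⟨a + δ, ũ⟩ ≤ c, and (ii) β‖ũ‖₂ ≤ ‖a + δ‖₂². Then ⟨a, x̃ − x⟩ ≤ ⟨a, δ⟩ + c/2 + (1/(2β)) · ‖δ‖₂ · ‖a + δ‖₂². (Theorem 4 of the paper, the accuracy guarantee for convex clustering on an evolving dataset, stated with the hypotheses used in its proof: a = vec(A) is the original data, δ = vec(Δ) the perturbation, u = (I_d⊗Q)ᵀvec(λ*) and ũ = (I_d⊗Q)ᵀvec(λ̃*) the dual images, x = vec(X*) the solution kept by Algorithm 1, and x̃ = vec(X̃*) the true solution for the evolved data; hypothesis (i) is the threshold condition of Algorithm 1 and hypothesis (ii) is the conclusion of Lemma 4.) -/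
open RealInnerProductSpace

/-- **Theorem 4 of the paper: accuracy guarantee for convex clustering on an
evolving dataset.**  With `x = a − u/2` and `x̃ = (a+δ) − ũ/2` (here `ũ` is
written `ut`), if `⟨a,u⟩ − ⟨a+δ, ũ⟩ ≤ c` and `β‖ũ‖₂ ≤ ‖a+δ‖₂²`, then
`⟨a, x̃ − x⟩ ≤ ⟨a,δ⟩ + c/2 + (1/(2β))·‖δ‖₂·‖a+δ‖₂²`. -/
theorem evolving_convex_clustering_accuracy
    (N : ℕ) (a δ u ut : EuclideanSpace ℝ (Fin N)) (β : ℝ) (hβ : 0 < β) (c : ℝ)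
    (h₁ : ⟪a, u⟫ - ⟪a + δ, ut⟫ ≤ c)
    (h₂ : β * ‖ut‖ ≤ ‖a + δ‖ ^ 2) :
    ⟪a, ((a + δ) - (1 / 2 : ℝ) • ut) - (a - (1 / 2 : ℝ) • u)⟫
      ≤ ⟪a, δ⟫ + c / 2 + (1 / (2 * β)) * ‖δ‖ * ‖a + δ‖ ^ 2 := by
  have hδu : ⟪δ, ut⟫ ≤ ‖δ‖ * ‖ut‖ := real_inner_le_norm δ ut
  have hut : ‖ut‖ ≤ ‖a + δ‖ ^ 2 / β := (le_div_iff₀' hβ).2 h₂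
  have hδ : (0:ℝ) ≤ ‖δ‖ := norm_nonneg δ
  have h3 : ‖δ‖ * ‖ut‖ ≤ ‖δ‖ * (‖a + δ‖ ^ 2 / β) := by
    exact mul_le_mul_of_nonneg_left hut hδ
  have hadd : ⟪a + δ, ut⟫ = ⟪a, ut⟫ + ⟪δ, ut⟫ := inner_add_left a δ ut
  have hexp : ⟪a, ((a + δ) - (1 / 2 : ℝ) • ut) - (a - (1 / 2 : ℝ) • u)⟫
      = ⟪a, δ⟫ + (1/2) * ⟪a, u⟫ - (1/2) * ⟪a, ut⟫ := by
    simp [inner_sub_right, inner_add_right, inner_smul_right]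
    ring
  rw [hexp]
  rw [hadd] at h₁
  have hβ' := hβ.le
  have : (1 / (2 * β)) * ‖δ‖ * ‖a + δ‖ ^ 2 = (1/2) * (‖δ‖ * (‖a + δ‖ ^ 2 / β)) := by
    field_simp
  rw [this]
  nlinarith [h₁, hδu, h3]
end

section
/- Let Ω, Ω̃, Φ be symmetric N×N real matrices with Ω and Ω̃ positive definite and Ω̃ = Ω + Φ, let β > 0 and c ∈ ℝ, and let x, x̃, u, ũ, r, r̃ ∈ ℝ^N. Assume: (i) ⟨x̃, Ω̃x̃⟩ − ⟨x, Ω̃x⟩ ≤ 4c; (ii) ⟨x̃, Φx̃⟩ = ⟨ũ, Ω̃⁻¹ΦΩ̃⁻¹ũ⟩ and ⟨x, Φx⟩ = ⟨u, Ω⁻¹ΦΩ⁻¹u⟩; (iii) β‖ũ‖₂ ≤ (1/4)⟨r̃, Ω̃⁻¹r̃⟩ and β‖u‖₂ ≤ (1/4)⟨r, Ω⁻¹r⟩. Then ⟨x̃, Ωx̃⟩ − ⟨x, Ωx⟩ ≤ (1/(16β²))·(⟨r̃, Ω̃⁻¹r̃⟩)²·‖Ω̃⁻¹ΦΩ̃⁻¹‖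 + (1/(16β²))·(⟨r, Ω⁻¹r⟩)²·‖Ω⁻¹ΦΩ⁻¹‖ + 4c, where ‖·‖ denotes the ℓ₂ operator norm of a matrix. (Theorem 5 of the paper, the accuracy guarantee for ridge regression on an evolving dataset, stated with the hypotheses used in its proof: x = vec(X*) and x̃ = vec(X̃*) are the retained and the true solutions, u and ũ the corresponding dual images (I_d⊗Q)ᵀvec(λ*) and (I_d⊗Q)ᵀvec(λ̃*), r = Λᵀy and r̃ = Λ̃ᵀy, Ω and Ω̃ the ridge matrices for the original and evolved data, Φ = Ω̃ − Ω their difference, hypothesis (i) is inequality (16) derived from the threshold condition of Algorithm 1, hypothesis (ii) is the substitution made in the proof, and hypothesis (iii) is the conclusion of Lemma 5 for both datasets.) -/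
open Matrix

/-- The ℓ₂ operator norm of a real square matrix, i.e. the norm of the
continuous linear map it induces on Euclidean space. -/
noncomputable def l2OpNorm {N : ℕ} (S : Matrix (Fin N) (Fin N) ℝ) : ℝ :=
  ‖Matrix.toEuclideanCLM (𝕜 := ℝ) S‖

/-! Writing `Ω = Ω̃ - Φ`, the claim is `(i)` plus the bound `-⟨x̃, Φx̃⟩ + ⟨x, Φx⟩ ≤ …`.
By `(ii)` each of these quadratic forms in `Φ` is one in `Ω̃⁻¹ΦΩ̃⁻¹` (resp. `Ω⁻¹ΦΩ⁻¹`), which is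
at most `‖ũ‖₂² ‖Ω̃⁻¹ΦΩ̃⁻¹‖` (resp. `‖u‖₂² ‖Ω⁻¹ΦΩ⁻¹‖`) in absolute value, and `(iii)` bounds
`‖ũ‖₂²` and `‖u‖₂²`. -/

lemma abs_dotProduct_mulVec_self_le {N : ℕ} (S : Matrix (Fin N) (Fin N) ℝ) (v : Fin N → ℝ) :
    |v ⬝ᵥ S *ᵥ v| ≤ (∑ i, v i ^ 2) * l2OpNorm S := by
  let w : EuclideanSpace ℝ (Fin N) := WithLp.toLp 2 v
  have hnorm : ‖w‖ ^ 2 = ∑ i, v i ^ 2 := EuclideanSpace.real_norm_sq_eq w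
  calc |v ⬝ᵥ S *ᵥ v| = |inner ℝ w (toEuclideanCLM (𝕜 := ℝ) S w)| := by
        rw [inner_toEuclideanCLM]
    _ ≤ ‖w‖ * ‖toEuclideanCLM (𝕜 := ℝ) S w‖ := abs_real_inner_le_norm _ _
    _ ≤ ‖w‖ * (‖toEuclideanCLM (𝕜 := ℝ) S‖ * ‖w‖) := by
        gcongr; exact ContinuousLinearMap.le_opNorm _ _
    _ = (∑ i, v i ^ 2) * l2OpNorm S := by rw [← hnorm, l2OpNorm]; ring

lemma le_div_sq_of_mul_sqrt_le {β s a : ℝ} (hβ : 0 < β) (h : β * √s ≤ a) : s ≤ (a / β) ^ 2 :=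
  (Real.sqrt_le_iff.1 ((le_div_iff₀' hβ).2 h)).2

lemma abs_dotProduct_mulVec_self_le_of_mul_sqrt_le {N : ℕ} (S : Matrix (Fin N) (Fin N) ℝ)
    {v : Fin N → ℝ} {β q : ℝ} (hβ : 0 < β) (h : β * √(∑ i, v i ^ 2) ≤ 1 / 4 * q) :
    |v ⬝ᵥ S *ᵥ v| ≤ 1 / (16 * β ^ 2) * q ^ 2 * l2OpNorm S := by
  have hsum : ∑ i, v i ^ 2 ≤ 1 / (16 * β ^ 2) * q ^ 2 := by
    convert le_div_sq_of_mul_sqrt_le hβ h using 1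
    field_simp
    ring
  calc |v ⬝ᵥ S *ᵥ v| ≤ (∑ i, v i ^ 2) * l2OpNorm S := abs_dotProduct_mulVec_self_le S v
    _ ≤ 1 / (16 * β ^ 2) * q ^ 2 * l2OpNorm S := by gcongr; exact norm_nonneg _

theorem evolving_ridge_regression_accuracy_general
    (N : ℕ) (Ω Ωt Φ : Matrix (Fin N) (Fin N) ℝ)
    (hsum : Ωt = Ω + Φ)
    (β : ℝ) (hβ : 0 < β) (c : ℝ)
    (x xt u ut r rt : Fin N → ℝ)
    (h₁ : xt ⬝ᵥ Ωt.mulVec xt - x ⬝ᵥ Ωt.mulVec x ≤ 4 * c)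
    (h₂ : xt ⬝ᵥ Φ.mulVec xt = ut ⬝ᵥ (Ωt⁻¹ * Φ * Ωt⁻¹).mulVec ut)
    (h₃ : x ⬝ᵥ Φ.mulVec x = u ⬝ᵥ (Ω⁻¹ * Φ * Ω⁻¹).mulVec u)
    (h₄ : β * Real.sqrt (∑ i, (ut i) ^ 2) ≤ (1 / 4) * (rt ⬝ᵥ Ωt⁻¹.mulVec rt))
    (h₅ : β * Real.sqrt (∑ i, (u i) ^ 2) ≤ (1 / 4) * (r ⬝ᵥ Ω⁻¹.mulVec r)) :
    xt ⬝ᵥ Ω.mulVec xt - x ⬝ᵥ Ω.mulVec x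
      ≤ (1 / (16 * β ^ 2)) * (rt ⬝ᵥ Ωt⁻¹.mulVec rt) ^ 2 * l2OpNorm (Ωt⁻¹ * Φ * Ωt⁻¹)
        + (1 / (16 * β ^ 2)) * (r ⬝ᵥ Ω⁻¹.mulVec r) ^ 2 * l2OpNorm (Ω⁻¹ * Φ * Ω⁻¹)
        + 4 * c := by
  have hsplit (v : Fin N → ℝ) : v ⬝ᵥ Ω *ᵥ v = v ⬝ᵥ Ωt *ᵥ v - v ⬝ᵥ Φ *ᵥ v := by
    rw [hsum, add_mulVec, dotProduct_add]; ring
  have hevolved := abs_dotProduct_mulVec_self_le_of_mul_sqrt_le (Ωt⁻¹ * Φ * Ωt⁻¹) hβ h₄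
  have hretained := abs_dotProduct_mulVec_self_le_of_mul_sqrt_le (Ω⁻¹ * Φ * Ω⁻¹) hβ h₅
  rw [← h₂] at hevolved
  rw [← h₃] at hretained
  rw [hsplit xt, hsplit x]
  linarith [neg_abs_le (xt ⬝ᵥ Φ *ᵥ xt), le_abs_self (x ⬝ᵥ Φ *ᵥ x)]

/-- **Theorem 5 of the paper: accuracy guarantee for ridge regression on an
evolving dataset.**  Here `Ωt`, `xt`, `ut`, `rt` stand for `Ω̃`, `x̃`, `ũ`, `r̃`.
Assuming (i) `⟨x̃, Ω̃x̃⟩ − ⟨x, Ω̃x⟩ ≤ 4c`, (ii) the substitutions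
`⟨x̃, Φx̃⟩ = ⟨ũ, Ω̃⁻¹ΦΩ̃⁻¹ũ⟩` and `⟨x, Φx⟩ = ⟨u, Ω⁻¹ΦΩ⁻¹u⟩`, and (iii) the
conclusions `β‖ũ‖₂ ≤ (1/4)⟨r̃, Ω̃⁻¹r̃⟩` and `β‖u‖₂ ≤ (1/4)⟨r, Ω⁻¹r⟩` of Lemma 5,
we get
`⟨x̃,Ωx̃⟩ − ⟨x,Ωx⟩ ≤ (1/(16β²))(⟨r̃,Ω̃⁻¹r̃⟩)²‖Ω̃⁻¹ΦΩ̃⁻¹‖ + (1/(16β²))(⟨r,Ω⁻¹r⟩)²‖Ω⁻¹ΦΩ⁻¹‖ + 4c`. -/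
theorem evolving_ridge_regression_accuracy
    (N : ℕ) (Ω Ωt Φ : Matrix (Fin N) (Fin N) ℝ)
    (hΩ : Ω.PosDef) (hΩt : Ωt.PosDef) (hΦ : Φ.IsSymm)
    (hsum : Ωt = Ω + Φ)
    (β : ℝ) (hβ : 0 < β) (c : ℝ)
    (x xt u ut r rt : Fin N → ℝ)
    (h₁ : xt ⬝ᵥ Ωt.mulVec xt - x ⬝ᵥ Ωt.mulVec x ≤ 4 * c)
    (h₂ : xt ⬝ᵥ Φ.mulVec xt = ut ⬝ᵥ (Ωt⁻¹ * Φ * Ωt⁻¹).mulVec ut)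
    (h₃ : x ⬝ᵥ Φ.mulVec x = u ⬝ᵥ (Ω⁻¹ * Φ * Ω⁻¹).mulVec u)
    (h₄ : β * Real.sqrt (∑ i, (ut i) ^ 2) ≤ (1 / 4) * (rt ⬝ᵥ Ωt⁻¹.mulVec rt))
    (h₅ : β * Real.sqrt (∑ i, (u i) ^ 2) ≤ (1 / 4) * (r ⬝ᵥ Ω⁻¹.mulVec r)) :
    xt ⬝ᵥ Ω.mulVec xt - x ⬝ᵥ Ω.mulVec x
      ≤ (1 / (16 * β ^ 2)) * (rt ⬝ᵥ Ωt⁻¹.mulVec rt) ^ 2 * l2OpNorm (Ωt⁻¹ * Φ * Ωt⁻¹)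
        + (1 / (16 * β ^ 2)) * (r ⬝ᵥ Ω⁻¹.mulVec r) ^ 2 * l2OpNorm (Ω⁻¹ * Φ * Ω⁻¹)
        + 4 * c :=
  evolving_ridge_regression_accuracy_general N Ω Ωt Φ hsum β hβ c x xt u ut r rt h₁ h₂ h₃ h₄ h₅
end
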